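/- arXiv:1812.07550 — 4 statements merged into one kernel-verified Lean document; each statement's English description precedes it below -/
import Mathlib

section
/- For every complex number q with 0 < |q| < 1, ∑_{j=0}^∞ q^{j²} · (1+q)(1+q³)⋯(1+q^{2j-1}) / ((1−q²)(1−q⁴)⋯(1−q^{2j})) = ∑_{j=0}^∞ q^{2j²} · (1+q^{−1})(1+q^{−3})⋯(1+q^{−(2j−1)}) / ((1−q²)(1−q⁴)⋯(1−q^{2j})). -/
/-! The two series agree term by term: `q ^ j²` is the product of the odd powers
`q, q³, …, q^(2j-1)`, and `x² (1 + x⁻¹) = x (1 + x)` factor by factor. -/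

open Finset

theorem sum_range_two_mul_add_one (j : ℕ) : ∑ i ∈ range j, (2 * i + 1) = j ^ 2 := by
  induction j with
  | zero => simp
  | succ n ih => rw [sum_range_succ, ih]; ring

theorem pow_sq_eq_prod_range_pow_odd {M : Type*} [CommMonoid M] (x : M) (j : ℕ) :
    x ^ (j ^ 2) = ∏ i ∈ range j, x ^ (2 * i + 1) := by
  rw [prod_pow_eq_pow_sum, sum_range_two_mul_add_one]

theorem sq_mul_one_add_inv {K : Type*} [DivisionSemiring K] (x : K) :
    x ^ 2 * (1 + x⁻¹) = x * (1 + x) := by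
  rw [sq, mul_add, mul_one, mul_self_mul_inv, mul_add, mul_one, add_comm]

theorem pow_two_mul_sq_mul_prod_one_add_inv {K : Type*} [Semifield K] (q : K) (j : ℕ) :
    q ^ (2 * j ^ 2) * ∏ i ∈ range j, (1 + (q ^ (2 * i + 1))⁻¹)
      = q ^ (j ^ 2) * ∏ i ∈ range j, (1 + q ^ (2 * i + 1)) := by
  rw [mul_comm 2, pow_mul, pow_sq_eq_prod_range_pow_odd, ← prod_pow, ← prod_mul_distrib,
    ← prod_mul_distrib]
  exact prod_congr rfl fun i _ => sq_mul_one_add_inv _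

theorem sum_eq_signed_sum_general (q : ℂ) :
    ∑' j : ℕ, q ^ (j ^ 2) * (∏ i ∈ Finset.range j, (1 + q ^ (2 * i + 1)))
        / (∏ i ∈ Finset.range j, (1 - q ^ (2 * (i + 1))))
      = ∑' j : ℕ, q ^ (2 * j ^ 2) * (∏ i ∈ Finset.range j, (1 + (q ^ (2 * i + 1))⁻¹))
        / (∏ i ∈ Finset.range j, (1 - q ^ (2 * (i + 1)))) :=
  tsum_congr fun j => by rw [pow_two_mul_sq_mul_prod_one_add_inv]

/-- For every complex `q` with `0 < |q| < 1`,
`∑_{j≥0} q^{j²} (1+q)(1+q³)⋯(1+q^{2j-1}) / ((1-q²)⋯(1-q^{2j}))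
  = ∑_{j≥0} q^{2j²} (1+q⁻¹)(1+q⁻³)⋯(1+q^{-(2j-1)}) / ((1-q²)⋯(1-q^{2j}))`. -/
theorem sum_eq_signed_sum (q : ℂ) (hq0 : 0 < ‖q‖) (hq1 : ‖q‖ < 1) :
    ∑' j : ℕ, q ^ (j ^ 2) * (∏ i ∈ Finset.range j, (1 + q ^ (2 * i + 1)))
        / (∏ i ∈ Finset.range j, (1 - q ^ (2 * (i + 1))))
      = ∑' j : ℕ, q ^ (2 * j ^ 2) * (∏ i ∈ Finset.range j, (1 + (q ^ (2 * i + 1))⁻¹))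
        / (∏ i ∈ Finset.range j, (1 - q ^ (2 * (i + 1)))) :=
  sum_eq_signed_sum_general q
end

section
/- For all positive integers n and j, the map g : G_{n,j} → S_{n,j} sending γ = (γ₁, …, γ_j) to the signed partition (π, ν), where π_k = γ_k + 4k − 2j − 2 + P(γ_k) + 2·∑_{i=k+1}^{j} P(γ_i) for 1 ≤ k ≤ j, and ν is the partition containing the part 2k−1 (with multiplicity one) exactly for those k with γ_k odd, is a bijection. -/
/-- The parity function: `P k = 0` if `k` is even and `P k = 1` if `k` is odd. -/
def P (m : ℤ) : ℤ := if Even m then 0 else 1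

/-- The map `g` of the bijection: `γ = (γ₁, …, γ_j) ↦ (π, ν)` where
`π_k = γ_k + 4k - 2j - 2 + P(γ_k) + 2 ∑_{i=k+1}^j P(γ_i)` and `ν` contains the part
`2k - 1` exactly for those `k` with `γ_k` odd.  (Indices here are 0-based, so the
`k`-th entry of the tuple, `k : Fin j`, is the `(k+1)`-st part.) -/
def gMap (j : ℕ) (γ : Fin j → ℤ) : (Fin j → ℤ) × Finset ℤ :=
  (fun k => γ k + 4 * ((k : ℤ) + 1) - 2 * j - 2 + P (γ k)
      + 2 * ∑ i ∈ Finset.Ioi k, P (γ i),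
   Finset.image (fun k : Fin j => 2 * (k : ℤ) + 1)
     (Finset.univ.filter fun k => Odd (γ k)))

/-- The inverse map `h`: `(π, ν) ↦ γ` where
`γ_k = π_k - 4k + 2j + 2 - f_{2k-1} - 2 ∑_{i=k+1}^j f_{2i-1}`, `f_{2k-1}` being the
multiplicity (0 or 1) of the part `2k - 1` in `ν`. -/
def hMap (j : ℕ) (σ : (Fin j → ℤ) × Finset ℤ) : Fin j → ℤ :=
  fun k => σ.1 k - 4 * ((k : ℤ) + 1) + 2 * (j : ℤ) + 2
    - (if 2 * (k : ℤ) + 1 ∈ σ.2 then 1 else 0)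
    - 2 * ∑ i ∈ Finset.Ioi k, (if 2 * (i : ℤ) + 1 ∈ σ.2 then 1 else 0)

/-- `Gset n j` : Göllnitz–Gordon partitions of `n` with exactly `j` parts, as
weakly decreasing `j`-tuples `γ` of positive integers with `γ_i - γ_{i+1} ≥ 2`,
and `γ_i - γ_{i+1} ≥ 3` whenever `γ_i` is even. -/
def Gset (n j : ℕ) : Set (Fin j → ℤ) :=
  {γ | (∀ k, 1 ≤ γ k) ∧
    (∀ i : ℕ, ∀ h : i + 1 < j,
      2 ≤ γ ⟨i, Nat.lt_of_succ_lt h⟩ - γ ⟨i + 1, h⟩ ∧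
      (Even (γ ⟨i, Nat.lt_of_succ_lt h⟩) → 3 ≤ γ ⟨i, Nat.lt_of_succ_lt h⟩ - γ ⟨i + 1, h⟩)) ∧
    ∑ k, γ k = (n : ℤ)}

/-- `Sset n j` : signed Göllnitz–Gordon partitions of `n` whose positive
subpartition `π` has exactly `j` parts: `π` is a weakly decreasing `j`-tuple of even
parts, each at least `2j`, and the negative subpartition `ν` is a set of distinct odd
positive parts, each at most `2j - 1` (hence there are at most `j` of them), with
`|π| - |ν| = n`. -/
def Sset (n j : ℕ) : Set ((Fin j → ℤ) × Finset ℤ) :=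
  {σ | Antitone σ.1 ∧ (∀ k, 1 ≤ σ.1 k) ∧
    (∀ k, Even (σ.1 k) ∧ 2 * (j : ℤ) ≤ σ.1 k) ∧
    σ.2.card ≤ j ∧
    (∀ m ∈ σ.2, Odd m ∧ 1 ≤ m ∧ m ≤ 2 * (j : ℤ) - 1) ∧
    (∑ k, σ.1 k) - (∑ m ∈ σ.2, m) = (n : ℤ)}

/-! Under `gMap` the difference of consecutive parts changes by `P(γ_i) + P(γ_{i+1}) - 4`, so
the Göllnitz–Gordon gap conditions on `γ` (gap `≥ 2`, and `≥ 3` after an even part) become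
exactly `π_i ≥ π_{i+1}`; the parts `π_k` are even, so the parities of the `γ_k` can be read off
`ν`, which makes `hMap` a two-sided inverse. Finally `∑_k (4k - 2j - 2) = 0` and, exchanging sums,
`∑_k ∑_{i>k} P(γ_i) = ∑_i (i - 1) P(γ_i)` (1-based), so
`|π| = |γ| + ∑_i (2i - 1) P(γ_i) = |γ| + |ν|`. -/

open Finset

lemma P_eq_emod_two (m : ℤ) : P m = m % 2 := by
  unfold P
  split_ifs with h
  · exact (Int.even_iff.mp h).symm
  · exact (Int.odd_iff.mp (Int.not_even_iff_odd.mp h)).symm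

def oddMult {j : ℕ} (ν : Finset ℤ) (k : Fin j) : ℤ := if 2 * (k : ℤ) + 1 ∈ ν then 1 else 0

lemma oddMult_eq_zero_or_one {j : ℕ} (ν : Finset ℤ) (k : Fin j) :
    oddMult ν k = 0 ∨ oddMult ν k = 1 := by
  unfold oddMult; split_ifs <;> simp

/-- The common shape of `gMap` and of the inverse of `hMap`: `e` is the parity sequence of `γ`,
resp. the multiplicity sequence `oddMult` of `ν`. -/
def shiftParts (j : ℕ) (a e : Fin j → ℤ) (k : Fin j) : ℤ :=
  a k + 4 * ((k : ℤ) + 1) - 2 * j - 2 + e k + 2 * ∑ i ∈ Ioi k, e i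

section shiftParts

variable {j : ℕ} (a e : Fin j → ℤ)

lemma shiftParts_sub_succ {i : ℕ} (h : i + 1 < j) :
    shiftParts j a e ⟨i, Nat.lt_of_succ_lt h⟩ - shiftParts j a e ⟨i + 1, h⟩
      = a ⟨i, Nat.lt_of_succ_lt h⟩ - a ⟨i + 1, h⟩ - 4
        + e ⟨i, Nat.lt_of_succ_lt h⟩ + e ⟨i + 1, h⟩ := by
  have hIoi : Ioi (⟨i, Nat.lt_of_succ_lt h⟩ : Fin j) = insert ⟨i + 1, h⟩ (Ioi ⟨i + 1, h⟩) := by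
    ext x
    simp only [mem_Ioi, mem_insert, Fin.lt_def, Fin.ext_iff]
    omega
  simp only [shiftParts, hIoi, sum_insert (show ⟨i + 1, h⟩ ∉ Ioi (⟨i + 1, h⟩ : Fin j) by simp)]
  push_cast
  ring

lemma shiftParts_of_val_eq_sub_one {k : Fin j} (hk : (k : ℕ) = j - 1) :
    shiftParts j a e k = a k + e k + 2 * j - 2 := by
  have : Ioi k = ∅ := by
    ext x
    simp only [mem_Ioi, Fin.lt_def, notMem_empty, iff_false]
    omega
  simp only [shiftParts, this, sum_empty]
  have : ((k : ℕ) : ℤ) = j - 1 := by omega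
  rw [this]
  ring

lemma sum_sum_Ioi : ∑ k : Fin j, ∑ i ∈ Ioi k, e i = ∑ i : Fin j, (i : ℤ) * e i := by
  rw [sum_comm' (t' := univ) (s' := Iio) (fun x y => by simp [and_comm])]
  simp only [sum_const, Fin.card_Iio, nsmul_eq_mul]

lemma sum_four_mul_sub (j : ℕ) : ∑ k : Fin j, (4 * ((k : ℤ) + 1) - 2 * j - 2) = 0 := by
  have hrev : ∑ k : Fin j, (k : ℤ) = ∑ k : Fin j, ((j : ℤ) - 1 - k) := by
    rw [← Equiv.sum_comp Fin.revPerm]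
    refine sum_congr rfl fun k _ => ?_
    simp only [Fin.revPerm_apply, Fin.val_rev]
    omega
  have : ∑ k : Fin j, (4 * ((k : ℤ) + 1) - 2 * j - 2)
      = 2 * ∑ k : Fin j, (k : ℤ) - 2 * ∑ k : Fin j, ((j : ℤ) - 1 - k) := by
    rw [mul_sum, mul_sum, ← sum_sub_distrib]
    exact sum_congr rfl fun k _ => by ring
  rw [this, hrev, sub_self]

lemma sum_shiftParts :
    ∑ k, shiftParts j a e k = ∑ k, a k + ∑ k : Fin j, (2 * (k : ℤ) + 1) * e k := by
  have : ∀ k, shiftParts j a e k = (a k + (2 * (k : ℤ) + 1) * e k)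
      + (4 * ((k : ℤ) + 1) - 2 * j - 2) + (2 * ∑ i ∈ Ioi k, e i - 2 * ((k : ℤ) * e k)) := by
    intro k; unfold shiftParts; ring
  rw [sum_congr rfl fun k _ => this k, sum_add_distrib, sum_add_distrib, sum_add_distrib,
    sum_four_mul_sub, sum_sub_distrib, ← mul_sum, ← mul_sum, sum_sum_Ioi]
  ring

lemma sum_Ioi_le_of_le_one (he : ∀ i, e i ≤ 1) (k : Fin j) :
    ∑ i ∈ Ioi k, e i ≤ j - 1 - k := by
  calc ∑ i ∈ Ioi k, e i ≤ ∑ _i ∈ Ioi k, (1 : ℤ) := sum_le_sum fun i _ => he i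
    _ = j - 1 - k := by
      rw [sum_const, Fin.card_Ioi, nsmul_one]
      have := k.isLt
      omega

end shiftParts

lemma antitone_fin_of_succ_le {α : Type*} [Preorder α] {j : ℕ} {f : Fin j → α}
    (h : ∀ i (hi : i + 1 < j), f ⟨i + 1, hi⟩ ≤ f ⟨i, Nat.lt_of_succ_lt hi⟩) : Antitone f := by
  cases j with
  | zero => exact fun a => a.elim0
  | succ m => exact Fin.antitone_iff_succ_le.mpr fun i => h i (by omega)

section oddParts

variable {j : ℕ}

lemma two_mul_add_one_injective : Function.Injective fun k : Fin j => 2 * (k : ℤ) + 1 :=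
  fun a b h => Fin.ext (by simp only at h; omega)

lemma eq_image_filter_of_forall_odd {ν : Finset ℤ}
    (hν : ∀ m ∈ ν, Odd m ∧ 1 ≤ m ∧ m ≤ 2 * (j : ℤ) - 1) :
    ν = (univ.filter fun k : Fin j => 2 * (k : ℤ) + 1 ∈ ν).image
      fun k : Fin j => 2 * (k : ℤ) + 1 := by
  ext m
  simp only [mem_image, mem_filter, mem_univ, true_and]
  refine ⟨fun hm => ?_, fun ⟨k, hk, hkm⟩ => hkm ▸ hk⟩
  obtain ⟨⟨t, rfl⟩, h1, h2⟩ := hν m hm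
  exact ⟨⟨t.toNat, by omega⟩, by simpa [show ((t.toNat : ℕ) : ℤ) = t by omega] using hm,
    by simp only; omega⟩

lemma sum_eq_sum_oddMult {ν : Finset ℤ} (hν : ∀ m ∈ ν, Odd m ∧ 1 ≤ m ∧ m ≤ 2 * (j : ℤ) - 1) :
    ∑ m ∈ ν, m = ∑ k : Fin j, (2 * (k : ℤ) + 1) * oddMult ν k := by
  conv_lhs => rw [eq_image_filter_of_forall_odd hν]
  rw [sum_image two_mul_add_one_injective.injOn, sum_filter]
  simp only [oddMult, mul_ite, mul_one, mul_zero]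

lemma mem_gMap_snd_iff (γ : Fin j → ℤ) (k : Fin j) :
    2 * (k : ℤ) + 1 ∈ (gMap j γ).2 ↔ Odd (γ k) := by
  simp [gMap, two_mul_add_one_injective.mem_finset_image]

lemma oddMult_gMap_snd (γ : Fin j → ℤ) (k : Fin j) : oddMult (gMap j γ).2 k = P (γ k) := by
  simp only [oddMult, mem_gMap_snd_iff, P_eq_emod_two]
  split_ifs with h
  · exact (Int.odd_iff.mp h).symm
  · exact (Int.even_iff.mp (Int.not_odd_iff_even.mp h)).symm

lemma forall_mem_gMap_snd (γ : Fin j → ℤ) :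
    ∀ m ∈ (gMap j γ).2, Odd m ∧ 1 ≤ m ∧ m ≤ 2 * (j : ℤ) - 1 := by
  simp only [gMap, mem_image, mem_filter, mem_univ, true_and]
  rintro _ ⟨k, -, rfl⟩
  exact ⟨⟨k, by ring⟩, by omega, by omega⟩

end oddParts

section maps

variable {n j : ℕ}

lemma gMap_fst (γ : Fin j → ℤ) : (gMap j γ).1 = shiftParts j γ fun k => P (γ k) := rfl

lemma shiftParts_hMap (σ : (Fin j → ℤ) × Finset ℤ) :
    shiftParts j (hMap j σ) (oddMult σ.2) = σ.1 := by
  funext k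
  simp only [shiftParts, hMap, oddMult]
  ring

lemma hMap_emod_two (σ : (Fin j → ℤ) × Finset ℤ) {k : Fin j} (hk : Even (σ.1 k)) :
    hMap j σ k % 2 = oddMult σ.2 k := by
  have := Int.even_iff.mp hk
  rcases oddMult_eq_zero_or_one σ.2 k with h | h <;>
  · simp only [hMap, oddMult] at h ⊢
    omega

lemma hMap_gMap (γ : Fin j → ℤ) : hMap j (gMap j γ) = γ := by
  funext k
  have hodd : ∀ i : Fin j, (if 2 * (i : ℤ) + 1 ∈ (gMap j γ).2 then (1 : ℤ) else 0) = P (γ i) :=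
    oddMult_gMap_snd γ
  simp only [hMap, hodd, gMap_fst, shiftParts]
  ring

lemma gMap_hMap_s4 {σ : (Fin j → ℤ) × Finset ℤ} (heven : ∀ k, Even (σ.1 k))
    (hν : ∀ m ∈ σ.2, Odd m ∧ 1 ≤ m ∧ m ≤ 2 * (j : ℤ) - 1) : gMap j (hMap j σ) = σ := by
  have hP : ∀ k, P (hMap j σ k) = oddMult σ.2 k := fun k => by
    rw [P_eq_emod_two, hMap_emod_two σ (heven k)]
  refine Prod.ext ?_ ?_
  · rw [gMap_fst, ← shiftParts_hMap σ]
    simp only [hP]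
  · conv_rhs => rw [eq_image_filter_of_forall_odd hν]
    refine congrArg (image _) (filter_congr fun k _ => ?_)
    rw [Int.odd_iff, hMap_emod_two σ (heven k)]
    unfold oddMult
    split_ifs with h <;> simp [h]

lemma antitone_gMap_fst {γ : Fin j → ℤ} (hγ : γ ∈ Gset n j) : Antitone (gMap j γ).1 := by
  refine antitone_fin_of_succ_le fun i hi => ?_
  have hstep := shiftParts_sub_succ γ (fun k => P (γ k)) hi
  obtain ⟨hgap, hgap_even⟩ := hγ.2.1 i hi
  rw [Int.even_iff] at hgap_even
  simp only [gMap_fst, P_eq_emod_two] at hstep ⊢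
  omega

lemma even_gMap_fst (γ : Fin j → ℤ) (k : Fin j) : Even ((gMap j γ).1 k) := by
  rw [Int.even_iff]
  simp only [gMap_fst, shiftParts, P_eq_emod_two]
  omega

lemma two_mul_le_gMap_fst {γ : Fin j → ℤ} (hγ : γ ∈ Gset n j) (k : Fin j) :
    2 * (j : ℤ) ≤ (gMap j γ).1 k := by
  let last : Fin j := ⟨j - 1, Nat.sub_one_lt_of_lt k.isLt⟩
  have hlast := shiftParts_of_val_eq_sub_one γ (fun k => P (γ k)) (k := last) rfl
  have hpos := hγ.1 last
  rw [P_eq_emod_two] at hlast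
  have := antitone_gMap_fst hγ
    (show k ≤ last from Fin.le_def.mpr (by show (k : ℕ) ≤ j - 1; omega))
  rw [gMap_fst] at this ⊢
  omega

lemma gMap_mapsTo : Set.MapsTo (gMap j) (Gset n j) (Sset n j) := by
  intro γ hγ
  have hbound := two_mul_le_gMap_fst hγ
  refine ⟨antitone_gMap_fst hγ, fun k => ?_, fun k => ⟨even_gMap_fst γ k, hbound k⟩,
    card_image_le.trans ((card_filter_le _ _).trans (card_fin j).le), forall_mem_gMap_snd γ, ?_⟩
  · have := hbound k
    have := k.isLt
    omega
  · rw [sum_eq_sum_oddMult (forall_mem_gMap_snd γ), gMap_fst, sum_shiftParts, hγ.2.2]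
    simp only [oddMult_gMap_snd, add_sub_cancel_right]

lemma hMap_mapsTo : Set.MapsTo (hMap j) (Sset n j) (Gset n j) := by
  rintro σ ⟨hanti, -, hparts, -, hν, hsum⟩
  refine ⟨fun k => ?_, fun i hi => ?_, ?_⟩
  · have hS := sum_Ioi_le_of_le_one (oddMult σ.2)
      (fun i => (oddMult_eq_zero_or_one σ.2 i).elim (·.le.trans zero_le_one) (·.le)) k
    have := (hparts k).2
    have := oddMult_eq_zero_or_one σ.2 k
    simp only [hMap, oddMult] at hS this ⊢
    omega
  · have hstep := shiftParts_sub_succ (hMap j σ) (oddMult σ.2) hi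
    rw [shiftParts_hMap] at hstep
    have := hanti (show (⟨i, Nat.lt_of_succ_lt hi⟩ : Fin j) ≤ ⟨i + 1, hi⟩ from
      Fin.le_def.mpr (Nat.le_succ i))
    have := hMap_emod_two σ (hparts ⟨i, Nat.lt_of_succ_lt hi⟩).1
    have := oddMult_eq_zero_or_one σ.2 ⟨i, Nat.lt_of_succ_lt hi⟩
    have := oddMult_eq_zero_or_one σ.2 ⟨i + 1, hi⟩
    rw [Int.even_iff]
    omega
  · rw [← shiftParts_hMap σ, sum_shiftParts, ← sum_eq_sum_oddMult hν] at hsum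
    linarith

end maps

theorem gMap_bijOn_general (n j : ℕ) :
    Set.BijOn (gMap j) (Gset n j) (Sset n j) :=
  Set.InvOn.bijOn ⟨fun γ _ => hMap_gMap γ,
    fun _ ⟨_, _, hparts, _, hν, _⟩ => gMap_hMap_s4 (fun k => (hparts k).1) hν⟩
    gMap_mapsTo hMap_mapsTo

/-- For all positive `n` and `j`, the map `g` is a bijection from `G_{n,j}` onto
`S_{n,j}`. -/
theorem gMap_bijOn (n j : ℕ) (hn : 0 < n) (hj : 0 < j) :
    Set.BijOn (gMap j) (Gset n j) (Sset n j) :=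
  gMap_bijOn_general n j
end

section
/- For every nonnegative integer n, A(n) = C(n), where A(n) is the number of partitions of n whose parts, in decreasing order, satisfy γ_i − γ_{i+1} ≥ 2, with γ_i − γ_{i+1} ≥ 3 whenever γ_i is even, and C(n) is the number of signed partitions of n in which the negative parts are distinct, odd, and smaller in magnitude than twice the number of positive parts, and the positive parts are even and each at least twice the number of positive parts. -/
/-- The parts of `p` sorted in weakly increasing order. -/
def sortedParts {n : ℕ} (p : n.Partition) : List ℕ := p.parts.sort (· ≤ ·)

/-- A partition is a Göllnitz–Gordon partition if its parts, in decreasing order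
`γ₁ ≥ γ₂ ≥ ⋯`, satisfy `γ_i - γ_{i+1} ≥ 2`, with `γ_i - γ_{i+1} ≥ 3` whenever `γ_i`
is even.  (In the increasing sorted list `l`, the larger of two consecutive parts
`l_i ≤ l_{i+1}` plays the role of `γ_i`.) -/
def IsGG {n : ℕ} (p : n.Partition) : Prop :=
  ∀ i : ℕ, ∀ h : i + 1 < (sortedParts p).length,
    2 ≤ (sortedParts p).get ⟨i + 1, h⟩ - (sortedParts p).get ⟨i, Nat.lt_of_succ_lt h⟩ ∧
    (Even ((sortedParts p).get ⟨i + 1, h⟩) →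
      3 ≤ (sortedParts p).get ⟨i + 1, h⟩ - (sortedParts p).get ⟨i, Nat.lt_of_succ_lt h⟩)

/-- `A n` is the number of Göllnitz–Gordon partitions of `n`. -/
noncomputable def A (n : ℕ) : ℕ := Nat.card {p : n.Partition // IsGG p}

/-- A *signed partition* of `n` is a pair of multisets of positive integers
`(π, ν)` (the positive and negative parts) with `|π| - |ν| = n`.  It is an
*Andrews signed Göllnitz–Gordon partition* if the negative parts are distinct,
odd, and smaller in magnitude than twice the number of positive parts, while the
positive parts are even and each at least twice the number of positive parts. -/
def IsSignedGG (n : ℕ) (s : Multiset ℕ × Multiset ℕ) : Prop :=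
  (∀ a ∈ s.1, 0 < a) ∧ (∀ a ∈ s.2, 0 < a) ∧
  (∀ a ∈ s.1, Even a ∧ 2 * Multiset.card s.1 ≤ a) ∧
  s.2.Nodup ∧ (∀ a ∈ s.2, Odd a ∧ a < 2 * Multiset.card s.1) ∧
  (s.1.sum : ℤ) - (s.2.sum : ℤ) = (n : ℤ)

/-- `C n` is the number of Andrews signed Göllnitz–Gordon partitions of `n`. -/
noncomputable def C (n : ℕ) : ℕ :=
  Nat.card {s : Multiset ℕ × Multiset ℕ // IsSignedGG n s}

/-!
Sort the `k` positive parts of a signed partition as `q₀ ≤ ⋯ ≤ q_{k-1}` and record its negative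
parts, distinct odd numbers below `2k`, as the set `T ⊆ {0, …, k-1}` of indices `j` with
`2(k-1-j)+1` negative. The corresponding Göllnitz–Gordon partition has the parts
`gᵢ = qᵢ - 2k + 4i + 2 - wᵢ` with `wᵢ = 2 #{j ∈ T | j < i} + [i ∈ T]`. As `qᵢ` is even, `gᵢ` is
odd exactly when `i ∈ T`, so `T` can be read off from `g`; since
`w_{i+1} - wᵢ = [i ∈ T] + [i+1 ∈ T]`, the condition `qᵢ ≤ q_{i+1}` is the gap condition between
`gᵢ` and `g_{i+1}`; and `∑ wᵢ = ∑_{j ∈ T} (2(k-1-j)+1)`, so the shift removes exactly the weight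
of the negative parts.
-/

open Finset

namespace SignedGG

def GGGap (a b : ℕ) : Prop := 2 ≤ b - a ∧ (Even b → 3 ≤ b - a)

theorem ggGap_iff {a b : ℕ} : GGGap a b ↔ a + 4 ≤ b + a % 2 + b % 2 := by
  rw [GGGap, Nat.even_iff]
  omega

theorem GGGap.le {a b : ℕ} (h : GGGap a b) : a ≤ b := by
  have := h.1
  omega

theorem isGG_iff_isChain {n : ℕ} (p : n.Partition) :
    IsGG p ↔ (sortedParts p).IsChain GGGap := by
  simp only [IsGG, List.isChain_iff_getElem, List.get_eq_getElem, GGGap]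

theorem sum_sortedParts {n : ℕ} (p : n.Partition) : (sortedParts p).sum = n := by
  rw [← Multiset.sum_coe, sortedParts, Multiset.sort_eq, p.parts_sum]

theorem sort_coe_of_pairwise {l : List ℕ} (h : l.Pairwise (· ≤ ·)) :
    Multiset.sort (l : Multiset ℕ) (· ≤ ·) = l := by
  rw [Multiset.coe_sort]
  exact List.mergeSort_eq_self _ h

def IsGGList (n : ℕ) (g : List ℕ) : Prop := g.IsChain GGGap ∧ (∀ a ∈ g, 0 < a) ∧ g.sum = n

def partitionEquivGGList (n : ℕ) :
    {p : n.Partition // IsGG p} ≃ {g : List ℕ // IsGGList n g} where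
  toFun p := ⟨sortedParts p.1, (isGG_iff_isChain p.1).1 p.2,
    fun _ ha ↦ p.1.parts_pos ((Multiset.mem_sort _).1 ha), sum_sortedParts p.1⟩
  invFun g := ⟨⟨g.1, fun ha ↦ g.2.2.1 _ ha, by rw [Multiset.sum_coe, g.2.2.2]⟩, by
    rw [isGG_iff_isChain, sortedParts,
      sort_coe_of_pairwise (List.isChain_iff_pairwise.1 (g.2.1.imp fun _ _ ↦ GGGap.le))]
    exact g.2.1⟩
  left_inv p := Subtype.ext (Nat.Partition.ext (Multiset.sort_eq _ _))
  right_inv g := Subtype.ext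
    (sort_coe_of_pairwise (List.isChain_iff_pairwise.1 (g.2.1.imp fun _ _ ↦ GGGap.le)))

def negPart (k j : ℕ) : ℕ := 2 * (k - 1 - j) + 1

theorem negPart_injOn (k : ℕ) : Set.InjOn (negPart k) (range k) := by
  intro i hi j hj h
  simp only [coe_range, Set.mem_Iio, negPart] at hi hj h
  omega

def negIndices (k : ℕ) (ν : Multiset ℕ) : Finset ℕ := {j ∈ range k | negPart k j ∈ ν}

theorem image_negPart_negIndices {k : ℕ} {ν : Multiset ℕ} (hν : ν.Nodup)
    (hodd : ∀ a ∈ ν, Odd a ∧ a < 2 * k) : ((negIndices k ν).image (negPart k)).val = ν := by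
  refine (Multiset.Nodup.ext (Finset.nodup _) hν).2 fun a ↦ ?_
  simp only [Finset.mem_val, mem_image, negIndices, mem_filter, mem_range]
  constructor
  · rintro ⟨j, ⟨-, hj⟩, rfl⟩
    exact hj
  · intro ha
    obtain ⟨⟨m, rfl⟩, hlt⟩ := hodd a ha
    have hm : negPart k (k - 1 - m) = 2 * m + 1 := by
      unfold negPart
      omega
    exact ⟨k - 1 - m, ⟨by omega, hm ▸ ha⟩, hm⟩

theorem negIndices_image_negPart {k : ℕ} {T : Finset ℕ} (hT : T ⊆ range k) :
    negIndices k (T.image (negPart k)).val = T := by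
  ext j
  simp only [negIndices, mem_filter, mem_range, Finset.mem_val, mem_image]
  constructor
  · rintro ⟨hj, i, hi, hij⟩
    rwa [← negPart_injOn k (hT hi) (mem_range.2 hj) hij]
  · intro hj
    exact ⟨mem_range.1 (hT hj), j, hj, rfl⟩

theorem sum_image_negPart {k : ℕ} {T : Finset ℕ} (hT : T ⊆ range k) :
    ((T.image (negPart k)).val).sum = ∑ j ∈ T, negPart k j := by
  rw [sum_val, sum_image ((negPart_injOn k).mono hT)]
  rfl

def IsSignedList (n : ℕ) (q : List ℕ) (T : Finset ℕ) : Prop :=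
  q.IsChain (· ≤ ·) ∧ (∀ a ∈ q, Even a ∧ 2 * q.length ≤ a) ∧ T ⊆ range q.length ∧
    q.sum = n + ∑ j ∈ T, negPart q.length j

theorem isSignedList_of_isSignedGG {n : ℕ} {s : Multiset ℕ × Multiset ℕ} (hs : IsSignedGG n s) :
    IsSignedList n (s.1.sort (· ≤ ·)) (negIndices (Multiset.card s.1) s.2) := by
  obtain ⟨-, -, hπ, hν, hνodd, hsum⟩ := hs
  have hT : negIndices (Multiset.card s.1) s.2 ⊆ range (Multiset.card s.1) := filter_subset _ _
  refine ⟨List.isChain_iff_pairwise.2 (Multiset.pairwise_sort _ _), fun a ha ↦ ?_, ?_, ?_⟩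
  · rw [Multiset.length_sort]
    exact hπ a ((Multiset.mem_sort _).1 ha)
  · rwa [Multiset.length_sort]
  · rw [Multiset.length_sort, ← sum_image_negPart hT, image_negPart_negIndices hν hνodd,
      ← Multiset.sum_coe, Multiset.sort_eq]
    omega

theorem isSignedGG_of_isSignedList {n : ℕ} {q : List ℕ} {T : Finset ℕ} (h : IsSignedList n q T) :
    IsSignedGG n (q, (T.image (negPart q.length)).val) := by
  obtain ⟨-, hq, hT, hsum⟩ := h
  have hν : ∀ a ∈ (T.image (negPart q.length)).val, Odd a ∧ a < 2 * q.length := by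
    simp only [Finset.mem_val, mem_image]
    rintro _ ⟨j, hj, rfl⟩
    exact ⟨odd_two_mul_add_one _, by have := mem_range.1 (hT hj); unfold negPart; omega⟩
  refine ⟨fun a ha ↦ ?_, fun a ha ↦ (hν a ha).1.pos, ?_, (T.image _).nodup, ?_, ?_⟩
  · have := (hq a ha).2
    have := List.length_pos_of_mem (Multiset.mem_coe.1 ha)
    omega
  · simpa only [Multiset.coe_card, Multiset.mem_coe] using hq
  · simpa only [Multiset.coe_card] using hν
  · rw [Multiset.sum_coe, sum_image_negPart hT, hsum]
    push_cast
    ring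

def signedGGEquivSignedList (n : ℕ) :
    {s : Multiset ℕ × Multiset ℕ // IsSignedGG n s} ≃
      {x : List ℕ × Finset ℕ // IsSignedList n x.1 x.2} where
  toFun s := ⟨(s.1.1.sort (· ≤ ·), negIndices (Multiset.card s.1.1) s.1.2),
    isSignedList_of_isSignedGG s.2⟩
  invFun x := ⟨(x.1.1, (x.1.2.image (negPart x.1.1.length)).val), isSignedGG_of_isSignedList x.2⟩
  left_inv s := Subtype.ext (Prod.ext (Multiset.sort_eq _ _) (by
    dsimp only
    rw [Multiset.length_sort]
    exact image_negPart_negIndices s.2.2.2.2.1 s.2.2.2.2.2.1))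
  right_inv x := Subtype.ext (Prod.ext (sort_coe_of_pairwise (List.isChain_iff_pairwise.1 x.2.1))
    (by dsimp only; rw [Multiset.coe_card]; exact negIndices_image_negPart x.2.2.2.1))

def weight (ε : ℕ → ℕ) (i : ℕ) : ℕ := 2 * ∑ j ∈ range i, ε j + ε i

theorem weight_succ (ε : ℕ → ℕ) (i : ℕ) : weight ε (i + 1) = weight ε i + ε i + ε (i + 1) := by
  rw [weight, weight, sum_range_succ]
  ring

theorem weight_le {ε : ℕ → ℕ} (hε : ∀ j, ε j ≤ 1) (i : ℕ) : weight ε i ≤ 2 * i + 1 := by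
  have : ∑ j ∈ range i, ε j ≤ i := by
    simpa using sum_le_card_nsmul (range i) ε 1 fun j _ ↦ hε j
  have := hε i
  rw [weight]
  omega

theorem weight_mod_two {ε : ℕ → ℕ} (hε : ∀ j, ε j ≤ 1) (i : ℕ) : weight ε i % 2 = ε i := by
  have := hε i
  rw [weight]
  omega

theorem sum_weight (ε : ℕ → ℕ) (k : ℕ) :
    ∑ i ∈ range k, weight ε i = ∑ j ∈ range k, ε j * negPart k j := by
  induction k with
  | zero => simp
  | succ k ih =>
    have shift : ∀ j ∈ range k, ε j * negPart (k + 1) j = ε j * negPart k j + 2 * ε j := by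
      intro j hj
      rw [mem_range] at hj
      rw [negPart, negPart, show k + 1 - 1 - j = k - 1 - j + 1 by omega]
      ring
    have last : negPart (k + 1) k = 1 := by simp [negPart]
    rw [sum_range_succ, ih, sum_range_succ, sum_congr rfl shift, sum_add_distrib, ← mul_sum,
      weight, last]
    ring

def mark (T : Finset ℕ) (j : ℕ) : ℕ := if j ∈ T then 1 else 0

theorem mark_le_one (T : Finset ℕ) (j : ℕ) : mark T j ≤ 1 := by
  unfold mark
  split_ifs <;> simp

theorem mark_injective : Function.Injective mark := by
  intro T T' h
  ext j
  have := congr_fun h j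
  simp only [mark] at this
  split_ifs at this <;> simp_all

theorem sum_range_mark_mul {T : Finset ℕ} {k : ℕ} (hT : T ⊆ range k) (f : ℕ → ℕ) :
    ∑ j ∈ range k, mark T j * f j = ∑ j ∈ T, f j := by
  simp only [mark, boole_mul, sum_ite_mem, inter_eq_right.2 hT]

theorem _root_.List.sum_eq_sum_range_getD (l : List ℕ) :
    l.sum = ∑ i ∈ range l.length, l.getD i 0 := by
  rw [← Fin.sum_univ_getElem, ← Fin.sum_univ_eq_sum_range]
  simp

theorem sum_range_four_mul_add_two (k : ℕ) : ∑ i ∈ range k, (4 * i + 2) = 2 * k * k := by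
  induction k with
  | zero => rfl
  | succ k ih => rw [sum_range_succ, ih]; ring

structure IsShift (T : Finset ℕ) (q g : List ℕ) : Prop where
  length_eq : g.length = q.length
  getElem_add : ∀ i (hq : i < q.length) (hg : i < g.length),
    g[i] + (2 * q.length + weight (mark T) i) = q[i] + (4 * i + 2)

namespace IsShift

variable {T : Finset ℕ} {q g : List ℕ}

theorem even_iff (h : IsShift T q g) {i : ℕ} (hq : i < q.length) (hg : i < g.length) :
    Even q[i] ↔ g[i] % 2 = mark T i := by
  have := h.getElem_add i hq hg
  have := weight_mod_two (mark_le_one T) i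
  rw [Nat.even_iff]
  omega

theorem isChain_iff (h : IsShift T q g) (hpar : ∀ i (hg : i < g.length), g[i] % 2 = mark T i) :
    q.IsChain (· ≤ ·) ↔ g.IsChain GGGap := by
  simp only [List.isChain_iff_getElem, h.length_eq, ggGap_iff]
  refine forall_congr' fun i ↦ forall_congr' fun hi ↦ ?_
  have hg : i + 1 < g.length := h.length_eq ▸ hi
  have := h.getElem_add i (by omega) (by omega)
  have := h.getElem_add (i + 1) hi hg
  have := weight_succ (mark T) i
  have := hpar i (by omega)
  have := hpar (i + 1) hg
  omega

theorem sum_eq (h : IsShift T q g) :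
    q.sum = g.sum + ∑ j ∈ range q.length, mark T j * negPart q.length j := by
  have pointwise : ∀ i ∈ range q.length,
      g.getD i 0 + (2 * q.length + weight (mark T) i) = q.getD i 0 + (4 * i + 2) := by
    intro i hi
    rw [mem_range] at hi
    rw [List.getD_eq_getElem _ _ hi, List.getD_eq_getElem _ _ (h.length_eq ▸ hi)]
    exact h.getElem_add i hi _
  have := sum_congr rfl pointwise
  rw [sum_add_distrib (f := fun i ↦ g.getD i 0), sum_add_distrib (f := fun _ ↦ 2 * q.length),
    sum_add_distrib (f := fun i ↦ q.getD i 0), sum_const, card_range, smul_eq_mul, sum_weight,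
    sum_range_four_mul_add_two] at this
  rw [List.sum_eq_sum_range_getD q, List.sum_eq_sum_range_getD g, h.length_eq]
  linarith

theorem left_unique {q' : List ℕ} (h : IsShift T q g) (h' : IsShift T q' g) : q = q' := by
  have hlen : q.length = q'.length := h.length_eq.symm.trans h'.length_eq
  refine List.ext_getElem hlen fun i hi hi' ↦ ?_
  have := h.getElem_add i hi (h.length_eq ▸ hi)
  have := h'.getElem_add i hi' (h.length_eq ▸ hi)
  omega

theorem right_unique {g' : List ℕ} (h : IsShift T q g) (h' : IsShift T q g') : g = g' := by
  refine List.ext_getElem (h.length_eq.trans h'.length_eq.symm) fun i hi hi' ↦ ?_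
  have := h.getElem_add i (h.length_eq ▸ hi) hi
  have := h'.getElem_add i (h.length_eq ▸ hi) hi'
  omega

end IsShift

def oddPositions (g : List ℕ) : Finset ℕ := {j ∈ range g.length | g.getD j 0 % 2 = 1}

theorem mark_oddPositions (g : List ℕ) (j : ℕ) : mark (oddPositions g) j = g.getD j 0 % 2 := by
  by_cases hj : j < g.length
  · simp only [mark, oddPositions, mem_filter, mem_range, hj, true_and]
    split_ifs <;> omega
  · simp [mark, oddPositions, hj]

def toGG (q : List ℕ) (T : Finset ℕ) : List ℕ :=
  q.mapIdx fun i a ↦ a + (4 * i + 2) - (2 * q.length + weight (mark T) i)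

def toSigned (g : List ℕ) : List ℕ :=
  g.mapIdx fun i a ↦ a + (2 * g.length + weight (mark (oddPositions g)) i) - (4 * i + 2)

variable {n : ℕ} {T : Finset ℕ} {q g : List ℕ}

theorem isShift_toGG (hq : ∀ a ∈ q, 2 * q.length ≤ a) : IsShift T q (toGG q T) where
  length_eq := List.length_mapIdx
  getElem_add i hi _ := by
    have := hq _ (List.getElem_mem hi)
    have := weight_le (mark_le_one T) i
    simp only [toGG, List.getElem_mapIdx]
    omega

theorem le_getElem_add_weight (hg : g.IsChain GGGap) (hpos : ∀ a ∈ g, 0 < a) :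
    ∀ i (hi : i < g.length), 4 * i + 2 ≤ g[i] + weight (mark (oddPositions g)) i := by
  intro i
  induction i with
  | zero =>
    intro hi
    have := hpos _ (List.getElem_mem hi)
    simp only [weight, mark_oddPositions, List.getD_eq_getElem _ _ hi, range_zero, sum_empty]
    omega
  | succ i ih =>
    intro hi
    have := ih (by omega)
    have := ggGap_iff.1 (hg.getElem i hi)
    simp only [weight_succ, mark_oddPositions, List.getD_eq_getElem _ _ hi,
      List.getD_eq_getElem _ _ (Nat.lt_of_succ_lt hi)]
    omega

theorem isShift_toSigned (hg : g.IsChain GGGap) (hpos : ∀ a ∈ g, 0 < a) :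
    IsShift (oddPositions g) (toSigned g) g where
  length_eq := List.length_mapIdx.symm
  getElem_add i hi hi' := by
    have := le_getElem_add_weight hg hpos i hi'
    simp only [toSigned, List.getElem_mapIdx, List.length_mapIdx]
    omega

theorem isGGList_toGG (h : IsSignedList n q T) : IsGGList n (toGG q T) := by
  obtain ⟨hchain, hq, hT, hsum⟩ := h
  have hs := isShift_toGG (T := T) fun a ha ↦ (hq a ha).2
  have hpar : ∀ i (hi : i < (toGG q T).length), (toGG q T)[i] % 2 = mark T i := fun i hi ↦
    (hs.even_iff (hs.length_eq ▸ hi) hi).1 (hq _ (List.getElem_mem _)).1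
  refine ⟨(hs.isChain_iff hpar).1 hchain, List.forall_mem_iff_getElem.2 fun i hi ↦ ?_, ?_⟩
  · have := hs.getElem_add i (hs.length_eq ▸ hi) hi
    have := (hq _ (List.getElem_mem (hs.length_eq ▸ hi))).2
    have := weight_le (mark_le_one T) i
    omega
  · have := hs.sum_eq
    rw [sum_range_mark_mul hT] at this
    omega

theorem isSignedList_toSigned (h : IsGGList n g) : IsSignedList n (toSigned g) (oddPositions g) := by
  obtain ⟨hchain, hpos, hsum⟩ := h
  have hs := isShift_toSigned hchain hpos
  have hpar : ∀ i (hi : i < g.length), g[i] % 2 = mark (oddPositions g) i := fun i hi ↦ by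
    rw [mark_oddPositions, List.getD_eq_getElem _ _ hi]
  have hT : oddPositions g ⊆ range (toSigned g).length := by
    rw [hs.length_eq.symm]
    exact filter_subset _ _
  refine ⟨(hs.isChain_iff hpar).2 hchain, List.forall_mem_iff_getElem.2 fun i hi ↦ ⟨?_, ?_⟩, hT, ?_⟩
  · exact (hs.even_iff hi (hs.length_eq ▸ hi)).2 (hpar _ _)
  · have := hs.getElem_add i hi (hs.length_eq ▸ hi)
    have := le_getElem_add_weight hchain hpos i (hs.length_eq ▸ hi)
    omega
  · have := hs.sum_eq
    rw [sum_range_mark_mul hT] at this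
    omega

theorem oddPositions_toGG (h : IsSignedList n q T) : oddPositions (toGG q T) = T := by
  obtain ⟨-, hq, hT, -⟩ := h
  have hs := isShift_toGG (T := T) fun a ha ↦ (hq a ha).2
  refine mark_injective (funext fun j ↦ ?_)
  rw [mark_oddPositions]
  by_cases hj : j < (toGG q T).length
  · rw [List.getD_eq_getElem _ _ hj]
    exact (hs.even_iff (hs.length_eq ▸ hj) hj).1 (hq _ (List.getElem_mem _)).1
  · have : j ∉ T := fun hjT ↦ hj (hs.length_eq ▸ mem_range.1 (hT hjT))
    rw [List.getD_eq_default _ _ (not_lt.1 hj)]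
    simp [mark, this]

theorem toSigned_toGG (h : IsSignedList n q T) : toSigned (toGG q T) = q := by
  obtain ⟨hchain, hpos, -⟩ := isGGList_toGG h
  have hs : IsShift (oddPositions (toGG q T)) q (toGG q T) :=
    (oddPositions_toGG h).symm ▸ isShift_toGG fun a ha ↦ (h.2.1 a ha).2
  exact (isShift_toSigned hchain hpos).left_unique hs

theorem toGG_toSigned (h : IsGGList n g) : toGG (toSigned g) (oddPositions g) = g :=
  (isShift_toGG fun a ha ↦ ((isSignedList_toSigned h).2.1 a ha).2).right_unique
    (isShift_toSigned h.1 h.2.1)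

def signedListEquivGGList (n : ℕ) :
    {x : List ℕ × Finset ℕ // IsSignedList n x.1 x.2} ≃ {g : List ℕ // IsGGList n g} where
  toFun x := ⟨toGG x.1.1 x.1.2, isGGList_toGG x.2⟩
  invFun g := ⟨(toSigned g.1, oddPositions g.1), isSignedList_toSigned g.2⟩
  left_inv x := Subtype.ext (Prod.ext (toSigned_toGG x.2) (oddPositions_toGG x.2))
  right_inv g := Subtype.ext (toGG_toSigned g.2)

end SignedGG

/-- The number of ordinary Göllnitz–Gordon partitions of `n` equals the number of
signed Göllnitz–Gordon partitions of `n`. -/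
theorem gg_eq_signed_gg (n : ℕ) : A n = C n :=
  Nat.card_congr ((SignedGG.partitionEquivGGList n).trans
    ((SignedGG.signedListEquivGGList n).symm.trans (SignedGG.signedGGEquivSignedList n).symm))
end

section
/- Fix positive integers n and j. Let σ = (π, ν) ∈ S_{n,j}, write ν = ⟨1^{f₁} 3^{f₃} ⋯ (2j−1)^{f_{2j−1}}⟩ where f_{2k−1} ∈ {0,1} is the multiplicity of the part 2k−1 in ν, and define γ_k = π_k − 4k + 2j + 2 − f_{2k−1} − 2·∑_{i=k+1}^{j} f_{2i−1} for 1 ≤ k ≤ j (the map h). Then applying the map g to γ = (γ₁, …, γ_j), namely forming π'_k = γ_k + 4k − 2j − 2 + P(γ_k) + 2·∑_{i=k+1}^{j} P(γ_i) and f'_{2k−1} = P(γ_k), recovers σ: π'_k = π_k and f'_{2k−1} = f_{2k−1} for all 1 ≤ k ≤ j. That is, g(h(σ)) = σ for all σ ∈ S_{n,j}. -/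
/-! Since every part of `π` is even, `γ_k = h(σ)_k` has the parity of `f_{2k-1}`. Hence the
parity terms `P(γ_i)` in `g` are exactly the multiplicities `f_{2i-1}` subtracted by `h`, so
`g` undoes `h` part by part and reads `ν` back off the odd entries of `γ`. -/

lemma P_eq_ite_odd (m : ℤ) : P m = if Odd m then 1 else 0 := by
  by_cases h : Even m <;> simp [P, h, ← Int.not_even_iff_odd]

lemma image_filter_two_mul_add_one_mem {j : ℕ} {S : Finset ℤ}
    (hS : ∀ m ∈ S, Odd m ∧ 1 ≤ m ∧ m ≤ 2 * (j : ℤ) - 1) :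
    (Finset.univ.filter fun k : Fin j => 2 * (k : ℤ) + 1 ∈ S).image
      (fun k : Fin j => 2 * (k : ℤ) + 1) = S := by
  ext m
  simp only [Finset.mem_image, Finset.mem_filter, Finset.mem_univ, true_and]
  refine ⟨fun ⟨k, hk, hkm⟩ => hkm ▸ hk, fun hm => ?_⟩
  obtain ⟨⟨c, rfl⟩, h1, h2⟩ := hS m hm
  have hc : 0 ≤ c := by omega
  exact ⟨⟨c.toNat, by omega⟩, by simpa [hc] using hm, by simp [hc]⟩

section

variable {j : ℕ} {σ : (Fin j → ℤ) × Finset ℤ}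

lemma odd_hMap_iff (hπ : ∀ k, Even (σ.1 k)) (k : Fin j) :
    Odd (hMap j σ k) ↔ 2 * (k : ℤ) + 1 ∈ σ.2 := by
  obtain ⟨a, ha⟩ := hπ k
  rw [Int.odd_iff]
  by_cases hk : 2 * (k : ℤ) + 1 ∈ σ.2 <;>
    simp only [hMap, ha, hk, if_true, if_false, iff_true, iff_false] <;> omega

lemma P_hMap (hπ : ∀ k, Even (σ.1 k)) (k : Fin j) :
    P (hMap j σ k) = if 2 * (k : ℤ) + 1 ∈ σ.2 then 1 else 0 := by
  rw [P_eq_ite_odd, if_congr (odd_hMap_iff hπ k) rfl rfl]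

lemma gMap_hMap_fst (hπ : ∀ k, Even (σ.1 k)) : (gMap j (hMap j σ)).1 = σ.1 := by
  funext k
  simp only [gMap, P_hMap hπ]
  simp only [hMap]
  ring

lemma gMap_hMap_snd (hπ : ∀ k, Even (σ.1 k))
    (hν : ∀ m ∈ σ.2, Odd m ∧ 1 ≤ m ∧ m ≤ 2 * (j : ℤ) - 1) :
    (gMap j (hMap j σ)).2 = σ.2 := by
  simp only [gMap, odd_hMap_iff hπ]
  exact image_filter_two_mul_add_one_mem hν

end

theorem gMap_hMap_general (n j : ℕ) :
    ∀ σ ∈ Sset n j, gMap j (hMap j σ) = σ := by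
  rintro σ ⟨-, -, hπ, -, hν, -⟩
  have hπ_even : ∀ k, Even (σ.1 k) := fun k => (hπ k).1
  exact Prod.ext (gMap_hMap_fst hπ_even) (gMap_hMap_snd hπ_even hν)

/-- For all positive `n`, `j` and every `σ ∈ S_{n,j}`, applying `g` to `h σ`
recovers `σ`: the map `g` is a right inverse of `h` on `S_{n,j}`. -/
theorem gMap_hMap (n j : ℕ) (hn : 0 < n) (hj : 0 < j) :
    ∀ σ ∈ Sset n j, gMap j (hMap j σ) = σ :=
  gMap_hMap_general n j
end
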